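/- Let D₁, D₂ > 0, r₁, r₂ > 0, ĥ₁, ĥ₂, ĝ₂ > 0, n > 0 and L₀ > 0. Suppose U₁, U₂ : [0, L₀] → ℝ are twice continuously differentiable, with Uᵢ(0) = Uᵢ(L₀) = 0, Uᵢ(ξ) > 0 for ξ ∈ (0, L₀), D₁ U₁''(ξ) + U₁(ξ)(r₁ − (ĥ₁ U₁(ξ))ⁿ) = 0 and D₂ U₂''(ξ) + U₂(ξ)(r₂ − (ĥ₂ U₂(ξ))ⁿ) = 0 for all ξ ∈ (0, L₀). If r₂/r₁ ≤ D₂/D₁ and (r₂/r₁)^{1/n} ĥ₁ ≤ ĝ₂, then ĝ₂ U₁(ξ) ≥ ĥ₂ U₂(ξ) for all ξ ∈ [0, L₀]. -/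

import Mathlib

/-! After rescaling, `V = (r₂/r₁)^(1/n) ĥ₁ U₁` and `W = ĥ₂ U₂` solve `D V'' + V (r₂ - Vⁿ) = 0` and
`D₂ W'' + W (r₂ - Wⁿ) = 0` with `D = D₁ r₂ / r₁ ≤ D₂`, and the maximum principle gives `Vⁿ ≤ r₂`.
If `W > V` somewhere, take a maximal interval `(a, b)` on which `W > V`. There the Wronskian
`W' V - V' W` has derivative `V W ((r₂ - Vⁿ) / D - (r₂ - Wⁿ) / D₂) > 0`, so it increases strictly;
but it is `≥ 0` at `a` and `≤ 0` at `b`, because `W - V` vanishes at both ends and is positive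
in between. -/

open Set Real
open Filter Topology

section
variable {f : ℝ → ℝ} {a b x : ℝ}

theorem nonneg_of_pos_on_Ioo (ha : f a = 0) (hb : f b = 0) (hpos : ∀ t ∈ Ioo a b, 0 < f t) :
    ∀ t ∈ Icc a b, 0 ≤ f t := by
  intro t ⟨hat, htb⟩
  rcases hat.eq_or_lt with rfl | hat
  · exact ha.ge
  rcases htb.eq_or_lt with rfl | htb
  · exact hb.ge
  exact (hpos t ⟨hat, htb⟩).le

theorem IsLocalMax.deriv_deriv_nonpos (h : IsLocalMax f x) (hc : ContinuousAt f x) :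
    deriv (deriv f) x ≤ 0 := by
  by_contra! hpos
  have hmin : IsLocalMin f x := isLocalMin_of_deriv_deriv_pos hpos h.deriv_eq_zero hc
  have hconst : f =ᶠ[𝓝 x] fun _ => f x := by
    filter_upwards [hmin, h] with y hxy hyx using le_antisymm hyx hxy
  simp [hconst.deriv.deriv_eq] at hpos

theorem IsMinOn.hasDerivWithinAt_left_nonneg {f' : ℝ} (hab : a < b)
    (hmin : IsMinOn f (Icc a b) a) (hf : HasDerivWithinAt f f' (Icc a b) a) : 0 ≤ f' := by
  have hdir : b - a ∈ posTangentConeAt (Icc a b) a :=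
    sub_mem_posTangentConeAt_of_segment_subset (segment_eq_Icc hab.le ▸ Set.Subset.rfl)
  have := hmin.localize.hasFDerivWithinAt_nonneg hf hdir
  rw [ContinuousLinearMap.toSpanSingleton_apply, smul_eq_mul] at this
  exact nonneg_of_mul_nonneg_right this (sub_pos.2 hab)

theorem IsMinOn.hasDerivWithinAt_right_nonpos {f' : ℝ} (hab : a < b)
    (hmin : IsMinOn f (Icc a b) b) (hf : HasDerivWithinAt f f' (Icc a b) b) : f' ≤ 0 := by
  have hdir : a - b ∈ posTangentConeAt (Icc a b) b :=
    sub_mem_posTangentConeAt_of_segment_subset (by rw [segment_symm, segment_eq_Icc hab.le])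
  have := hmin.localize.hasFDerivWithinAt_nonneg hf hdir
  rw [ContinuousLinearMap.toSpanSingleton_apply, smul_eq_mul] at this
  exact nonpos_of_mul_nonneg_right this (sub_neg.2 hab)

theorem hasDerivAt_derivWithin_Icc (hf : ContDiffOn ℝ 2 f (Icc a b)) (hx : x ∈ Ioo a b) :
    HasDerivAt (derivWithin f (Icc a b)) (deriv (deriv f) x) x := by
  have hC1 : ContDiffOn ℝ 1 (deriv f) (Ioo a b) :=
    (hf.mono Ioo_subset_Icc_self).deriv_of_isOpen isOpen_Ioo (by norm_num)
  have hdiff : DifferentiableAt ℝ (deriv f) x :=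
    (hC1.differentiableOn one_ne_zero x hx).differentiableAt (isOpen_Ioo.mem_nhds hx)
  refine hdiff.hasDerivAt.congr_of_eventuallyEq ?_
  filter_upwards [isOpen_Ioo.mem_nhds hx] with t ht
  exact derivWithin_of_mem_nhds (Icc_mem_nhds ht.1 ht.2)

end

theorem rpow_le_of_stationary {D r n p q : ℝ} {U : ℝ → ℝ} (hD : 0 ≤ D) (hn : 0 ≤ n)
    (hU : ContinuousOn U (Icc p q)) (hp : U p = 0) (hq : U q = 0)
    (hpos : ∀ t ∈ Ioo p q, 0 < U t)
    (hode : ∀ t ∈ Ioo p q, D * deriv (deriv U) t + U t * (r - U t ^ n) = 0) :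
    ∀ t ∈ Ioo p q, U t ^ n ≤ r := by
  intro t ht
  obtain ⟨x, hxI, hmax⟩ := isCompact_Icc.exists_isMaxOn
    (nonempty_Icc.2 (ht.1.trans ht.2).le) hU
  have hUx : 0 < U x := (hpos t ht).trans_le (hmax (Ioo_subset_Icc_self ht))
  have hx : x ∈ Ioo p q :=
    ⟨hxI.1.lt_of_ne (by rintro rfl; exact hUx.ne' hp),
      hxI.2.lt_of_ne (by rintro rfl; exact hUx.ne' hq)⟩
  have hloc : IsLocalMax U x := hmax.isLocalMax (Icc_mem_nhds hx.1 hx.2)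
  have hconcave : deriv (deriv U) x ≤ 0 :=
    hloc.deriv_deriv_nonpos ((hU x hxI).continuousAt (Icc_mem_nhds hx.1 hx.2))
  have hUxr : U x ^ n ≤ r := by
    have hreact : 0 ≤ U x * (r - U x ^ n) := by
      linarith [hode x hx, mul_nonpos_of_nonneg_of_nonpos hD hconcave]
    linarith [nonneg_of_mul_nonneg_right hreact hUx]
  calc U t ^ n ≤ U x ^ n := rpow_le_rpow (hpos t ht).le (hmax (Ioo_subset_Icc_self ht)) hn
    _ ≤ r := hUxr

section
variable {f : ℝ → ℝ} {p q x : ℝ}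

theorem exists_zero_pos_on_Ioc (hpx : p ≤ x) (hf : ContinuousOn f (Icc p x)) (hp : f p ≤ 0)
    (hx : 0 < f x) : ∃ a ∈ Ico p x, f a = 0 ∧ ∀ t ∈ Ioc a x, 0 < f t := by
  set S := Icc p x ∩ f ⁻¹' Iic 0
  have hS : IsCompact S :=
    isCompact_Icc.of_isClosed_subset (hf.preimage_isClosed_of_isClosed isClosed_Icc isClosed_Iic)
      inter_subset_left
  obtain ⟨a, ⟨haI, hfa⟩, hgreatest⟩ := hS.exists_isGreatest ⟨p, ⟨left_mem_Icc.2 hpx, hp⟩⟩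
  have hpos : ∀ t ∈ Ioc a x, 0 < f t := fun t ht => by
    by_contra! hft
    exact (hgreatest ⟨⟨haI.1.trans ht.1.le, ht.2⟩, hft⟩).not_gt ht.1
  have hax : a < x := haI.2.lt_of_ne (by rintro rfl; exact (not_le.2 hx) hfa)
  obtain ⟨c, hcI, hfc⟩ : 0 ∈ f '' Icc a x :=
    intermediate_value_Icc hax.le (hf.mono (Icc_subset_Icc_left haI.1)) ⟨hfa, hx.le⟩
  have hca : c = a := le_antisymm (hgreatest ⟨⟨haI.1.trans hcI.1, hcI.2⟩, hfc.le⟩) hcI.1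
  exact ⟨a, ⟨haI.1, hax⟩, hca ▸ hfc, hpos⟩

theorem exists_zeros_pos_on_Ioo (hf : ContinuousOn f (Icc p q)) (hp : f p ≤ 0) (hq : f q ≤ 0)
    (hxI : x ∈ Icc p q) (hx : 0 < f x) :
    ∃ a b, p ≤ a ∧ a < b ∧ b ≤ q ∧ f a = 0 ∧ f b = 0 ∧ ∀ t ∈ Ioo a b, 0 < f t := by
  obtain ⟨a, ⟨hpa, hax⟩, hfa, hposL⟩ :=
    exists_zero_pos_on_Ioc hxI.1 (hf.mono (Icc_subset_Icc_right hxI.2)) hp hx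
  have hfneg : ContinuousOn (fun t => f (-t)) (Icc (-q) (-x)) :=
    hf.comp continuousOn_neg fun t ht => ⟨by linarith [hxI.1, ht.2], by linarith [ht.1]⟩
  obtain ⟨b', ⟨hqb, hbx⟩, hfb, hposR⟩ :=
    exists_zero_pos_on_Ioc (neg_le_neg hxI.2) hfneg (by simpa using hq) (by simpa using hx)
  refine ⟨a, -b', hpa, by linarith, by linarith, hfa, hfb, fun t ht => ?_⟩
  rcases le_or_gt t x with htx | htx
  · exact hposL t ⟨ht.1, htx⟩
  · simpa using hposR (-t) ⟨by linarith [ht.2], by linarith⟩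

end

theorem not_forall_lt_of_deriv_wronskian_pos {V W : ℝ → ℝ} {a b : ℝ} (hab : a < b)
    (hV : ContDiffOn ℝ 2 V (Icc a b)) (hW : ContDiffOn ℝ 2 W (Icc a b))
    (ha : V a = W a) (hb : V b = W b) (hVa : 0 ≤ V a) (hVb : 0 ≤ V b)
    (hderiv : ∀ t ∈ Ioo a b, 0 < deriv (deriv W) t * V t - deriv (deriv V) t * W t) :
    ¬ ∀ t ∈ Ioo a b, V t < W t := by
  intro hlt
  set V' := derivWithin V (Icc a b)
  set W' := derivWithin W (Icc a b)
  have hV' : ∀ t ∈ Icc a b, HasDerivWithinAt V (V' t) (Icc a b) t := fun t ht =>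
    (hV.differentiableOn two_ne_zero t ht).hasDerivWithinAt
  have hW' : ∀ t ∈ Icc a b, HasDerivWithinAt W (W' t) (Icc a b) t := fun t ht =>
    (hW.differentiableOn two_ne_zero t ht).hasDerivWithinAt
  set G : ℝ → ℝ := fun t => W' t * V t - V' t * W t
  have hG_mono : StrictMonoOn G (Icc a b) := by
    have hcont : ContinuousOn G (Icc a b) := by
      have hUD := uniqueDiffOn_Icc hab
      exact ((hW.continuousOn_derivWithin hUD one_le_two).mul hV.continuousOn).sub
        ((hV.continuousOn_derivWithin hUD one_le_two).mul hW.continuousOn)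
    refine strictMonoOn_of_deriv_pos (convex_Icc a b) hcont fun t ht => ?_
    rw [interior_Icc] at ht
    have hVt := (hV' t (Ioo_subset_Icc_self ht)).hasDerivAt (Icc_mem_nhds ht.1 ht.2)
    have hWt := (hW' t (Ioo_subset_Icc_self ht)).hasDerivAt (Icc_mem_nhds ht.1 ht.2)
    have hG : HasDerivAt G (deriv (deriv W) t * V t + W' t * V' t -
        (deriv (deriv V) t * W t + V' t * W' t)) t :=
      ((hasDerivAt_derivWithin_Icc hW ht).mul hVt).sub
      ((hasDerivAt_derivWithin_Icc hV ht).mul hWt)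
    rw [hG.deriv]
    linarith [hderiv t ht]
  have hmin : ∀ s, V s = W s → IsMinOn (fun t => W t - V t) (Icc a b) s := by
    intro s hs t ht
    rcases ht.1.eq_or_lt with rfl | hat
    · simp [ha, hs]
    rcases ht.2.eq_or_lt with rfl | htb
    · simp [hb, hs]
    simpa [hs] using (hlt t ⟨hat, htb⟩).le
  have hGa : 0 ≤ G a := by
    have := (hmin a ha).hasDerivWithinAt_left_nonneg hab
      ((hW' a (left_mem_Icc.2 hab.le)).sub (hV' a (left_mem_Icc.2 hab.le)))
    have hGa_eq : G a = V a * (W' a - V' a) := by simp only [G, ← ha]; ring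
    rw [hGa_eq]
    exact mul_nonneg hVa this
  have hGb : G b ≤ 0 := by
    have := (hmin b hb).hasDerivWithinAt_right_nonpos hab
      ((hW' b (right_mem_Icc.2 hab.le)).sub (hV' b (right_mem_Icc.2 hab.le)))
    have hGb_eq : G b = V b * (W' b - V' b) := by simp only [G, ← hb]; ring
    rw [hGb_eq]
    exact mul_nonpos_of_nonneg_of_nonpos hVb this
  have := hG_mono (left_mem_Icc.2 hab.le) (right_mem_Icc.2 hab.le) hab
  linarith

theorem wronskian_deriv_pos {D E r n v w v'' w'' : ℝ} (hD : 0 < D) (hDE : D ≤ E) (hn : 0 < n)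
    (hv : 0 < v) (hvw : v < w) (hvr : v ^ n ≤ r)
    (hv'' : D * v'' + v * (r - v ^ n) = 0) (hw'' : E * w'' + w * (r - w ^ n) = 0) :
    0 < w'' * v - v'' * w := by
  have hpow : v ^ n < w ^ n := rpow_lt_rpow hv.le hvw hn
  have hw : 0 < w := hv.trans hvw
  have key : D * E * (w'' * v - v'' * w) =
      v * w * ((E - D) * (r - v ^ n) + D * (w ^ n - v ^ n)) := by
    linear_combination D * v * hw'' - E * w * hv''
  have hrhs : 0 < v * w * ((E - D) * (r - v ^ n) + D * (w ^ n - v ^ n)) :=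
    mul_pos (mul_pos hv hw) (add_pos_of_nonneg_of_pos
      (mul_nonneg (sub_nonneg.2 hDE) (sub_nonneg.2 hvr)) (mul_pos hD (sub_pos.2 hpow)))
  rw [← key] at hrhs
  exact pos_of_mul_pos_right hrhs (mul_pos hD (hD.trans_le hDE)).le

theorem le_of_stationary_of_le_diffusivity {D E r n p q : ℝ} {V W : ℝ → ℝ}
    (hD : 0 < D) (hDE : D ≤ E) (hn : 0 < n)
    (hV : ContDiffOn ℝ 2 V (Icc p q)) (hW : ContDiffOn ℝ 2 W (Icc p q))
    (hVp : V p = 0) (hVq : V q = 0) (hWp : W p = 0) (hWq : W q = 0)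
    (hVpos : ∀ t ∈ Ioo p q, 0 < V t)
    (hVode : ∀ t ∈ Ioo p q, D * deriv (deriv V) t + V t * (r - V t ^ n) = 0)
    (hWode : ∀ t ∈ Ioo p q, E * deriv (deriv W) t + W t * (r - W t ^ n) = 0) :
    ∀ t ∈ Icc p q, W t ≤ V t := by
  by_contra! ⟨x, hxI, hx⟩
  have hVr := rpow_le_of_stationary hD.le hn.le hV.continuousOn hVp hVq hVpos hVode
  have hVnonneg := nonneg_of_pos_on_Ioo hVp hVq hVpos
  obtain ⟨a, b, hpa, hab, hbq, hfa, hfb, hpos⟩ :=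
    exists_zeros_pos_on_Ioo (f := fun t => W t - V t) (hW.continuousOn.sub hV.continuousOn)
      (by simp [hVp, hWp]) (by simp [hVq, hWq]) hxI (sub_pos.2 hx)
  have hsub : Icc a b ⊆ Icc p q := Icc_subset_Icc hpa hbq
  have hIoo : ∀ t ∈ Ioo a b, t ∈ Ioo p q := fun t ht => ⟨hpa.trans_lt ht.1, ht.2.trans_le hbq⟩
  refine not_forall_lt_of_deriv_wronskian_pos hab (hV.mono hsub) (hW.mono hsub)
    (sub_eq_zero.1 hfa).symm (sub_eq_zero.1 hfb).symm
    (hVnonneg a (hsub (left_mem_Icc.2 hab.le))) (hVnonneg b (hsub (right_mem_Icc.2 hab.le)))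
    (fun t ht => ?_) (fun t ht => sub_pos.1 (hpos t ht))
  exact wronskian_deriv_pos hD hDE hn (hVpos t (hIoo t ht)) (sub_pos.1 (hpos t ht))
    (hVr t (hIoo t ht)) (hVode t (hIoo t ht)) (hWode t (hIoo t ht))

theorem stationary_rescale {D r h k n t : ℝ} {U : ℝ → ℝ} (hk : 0 ≤ k) (hU : 0 ≤ h * U t)
    (hode : D * deriv (deriv U) t + U t * (r - (h * U t) ^ n) = 0) :
    D * k ^ n * deriv (deriv fun s => k * h * U s) t +
      k * h * U t * (r * k ^ n - (k * h * U t) ^ n) = 0 := by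
  simp only [deriv_const_mul_field']
  rw [mul_assoc k h (U t), mul_rpow hk hU]
  linear_combination k ^ n * k * h * hode

theorem stmt12_general (D₁ D₂ r₁ r₂ hhat₁ hhat₂ ghat₂ n L₀ : ℝ)
    (hD₁ : 0 < D₁) (hr₁ : 0 < r₁) (hr₂ : 0 < r₂)
    (hh₁ : 0 < hhat₁) (hn : 0 < n)
    (U₁ U₂ : ℝ → ℝ)
    (hreg₁ : ContDiffOn ℝ 2 U₁ (Icc 0 L₀)) (hreg₂ : ContDiffOn ℝ 2 U₂ (Icc 0 L₀))
    (hbc₁ : U₁ 0 = 0 ∧ U₁ L₀ = 0) (hbc₂ : U₂ 0 = 0 ∧ U₂ L₀ = 0)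
    (hpos₁ : ∀ ξ ∈ Ioo 0 L₀, 0 < U₁ ξ)
    (hode₁ : ∀ ξ ∈ Ioo 0 L₀,
      D₁ * deriv (deriv U₁) ξ + U₁ ξ * (r₁ - (hhat₁ * U₁ ξ) ^ n) = 0)
    (hode₂ : ∀ ξ ∈ Ioo 0 L₀,
      D₂ * deriv (deriv U₂) ξ + U₂ ξ * (r₂ - (hhat₂ * U₂ ξ) ^ n) = 0)
    (hrD : r₂ / r₁ ≤ D₂ / D₁)
    (hgh : (r₂ / r₁) ^ (1 / n) * hhat₁ ≤ ghat₂) :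
    ∀ ξ ∈ Icc 0 L₀, hhat₂ * U₂ ξ ≤ ghat₂ * U₁ ξ := by
  set c := (r₂ / r₁) ^ (1 / n)
  have hc : 0 < c := rpow_pos_of_pos (div_pos hr₂ hr₁) _
  have hcn : c ^ n = r₂ / r₁ := by
    rw [← rpow_mul (div_pos hr₂ hr₁).le, one_div_mul_cancel hn.ne', rpow_one]
  have hV : ∀ ξ ∈ Ioo 0 L₀, D₁ * (r₂ / r₁) * deriv (deriv fun s => c * hhat₁ * U₁ s) ξ +
      c * hhat₁ * U₁ ξ * (r₂ - (c * hhat₁ * U₁ ξ) ^ n) = 0 := fun ξ hξ => by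
    have := stationary_rescale hc.le (mul_pos hh₁ (hpos₁ ξ hξ)).le (hode₁ ξ hξ)
    rwa [hcn, mul_div_cancel₀ _ hr₁.ne'] at this
  have hW : ∀ ξ ∈ Ioo 0 L₀, D₂ * deriv (deriv fun s => hhat₂ * U₂ s) ξ +
      hhat₂ * U₂ ξ * (r₂ - (hhat₂ * U₂ ξ) ^ n) = 0 := fun ξ hξ => by
    simp only [deriv_const_mul_field']
    linear_combination hhat₂ * hode₂ ξ hξ
  have hDD : D₁ * (r₂ / r₁) ≤ D₂ := by rwa [← le_div_iff₀' hD₁]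
  have hcmp := le_of_stationary_of_le_diffusivity (by positivity) hDD hn
    ((contDiffOn_const.mul contDiffOn_const).mul hreg₁) (contDiffOn_const.mul hreg₂)
    (by simp [hbc₁.1]) (by simp [hbc₁.2]) (by simp [hbc₂.1]) (by simp [hbc₂.2])
    (fun ξ hξ => mul_pos (mul_pos hc hh₁) (hpos₁ ξ hξ)) hV hW
  intro ξ hξ
  calc hhat₂ * U₂ ξ ≤ c * hhat₁ * U₁ ξ := hcmp ξ hξ
    _ ≤ ghat₂ * U₁ ξ :=
      mul_le_mul_of_nonneg_right hgh (nonneg_of_pos_on_Ioo hbc₁.1 hbc₁.2 hpos₁ ξ hξ)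

/-- Corollary 1, case c = 0, non-invasibility: `U₁`, `U₂` positive
Dirichlet stationary states of `Dᵢ Uᵢ'' + Uᵢ(rᵢ − (ĥᵢUᵢ)ⁿ) = 0` on `[0, L₀]`. If
`r₂/r₁ ≤ D₂/D₁` and `(r₂/r₁)^{1/n} ĥ₁ ≤ ĝ₂`, then `ĝ₂ U₁ ≥ ĥ₂ U₂` on `[0, L₀]`. -/
theorem stmt12 (D₁ D₂ r₁ r₂ hhat₁ hhat₂ ghat₂ n L₀ : ℝ)
    (hD₁ : 0 < D₁) (hD₂ : 0 < D₂) (hr₁ : 0 < r₁) (hr₂ : 0 < r₂)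
    (hh₁ : 0 < hhat₁) (hh₂ : 0 < hhat₂) (hg₂ : 0 < ghat₂) (hn : 0 < n) (hL₀ : 0 < L₀)
    (U₁ U₂ : ℝ → ℝ)
    (hreg₁ : ContDiffOn ℝ 2 U₁ (Icc 0 L₀)) (hreg₂ : ContDiffOn ℝ 2 U₂ (Icc 0 L₀))
    (hbc₁ : U₁ 0 = 0 ∧ U₁ L₀ = 0) (hbc₂ : U₂ 0 = 0 ∧ U₂ L₀ = 0)
    (hpos₁ : ∀ ξ ∈ Ioo 0 L₀, 0 < U₁ ξ) (hpos₂ : ∀ ξ ∈ Ioo 0 L₀, 0 < U₂ ξ)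
    (hode₁ : ∀ ξ ∈ Ioo 0 L₀,
      D₁ * deriv (deriv U₁) ξ + U₁ ξ * (r₁ - (hhat₁ * U₁ ξ) ^ n) = 0)
    (hode₂ : ∀ ξ ∈ Ioo 0 L₀,
      D₂ * deriv (deriv U₂) ξ + U₂ ξ * (r₂ - (hhat₂ * U₂ ξ) ^ n) = 0)
    (hrD : r₂ / r₁ ≤ D₂ / D₁)
    (hgh : (r₂ / r₁) ^ (1 / n) * hhat₁ ≤ ghat₂) :
    ∀ ξ ∈ Icc 0 L₀, hhat₂ * U₂ ξ ≤ ghat₂ * U₁ ξ :=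
  stmt12_general D₁ D₂ r₁ r₂ hhat₁ hhat₂ ghat₂ n L₀ hD₁ hr₁ hr₂ hh₁ hn U₁ U₂ hreg₁ hreg₂ hbc₁ hbc₂
    hpos₁ hode₁ hode₂ hrD hgh
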